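/- Every finite simple 4-regular graph G on n vertices has a co-secure dominating set of cardinality at most 2n/3; in particular γ_cs(G) ≤ 2n/3. -/

import Mathlib

/-!
Colour the vertices with two colours so as to minimise the number of monochromatic edges.
Recolouring a single vertex changes that number by (its neighbours of the other colour) minus
(its neighbours of its own colour), so at a minimum every vertex has at least half of its
neighbours in the other class; in a 4-regular graph that is at least two. Each colour class `S`
is then a double dominating set in which every vertex has a neighbour outside `S`, and such a set
is co-secure: after swapping `u ∈ S` for an outside neighbour `v`, the vertex `u` is dominated by
`v` and every other vertex outside `S` keeps one of its two dominators. The smaller class has at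
most `n / 2 ≤ 2n / 3` vertices.
-/

/-- `D` is a dominating set of `G`: every vertex outside `D` has a neighbor in `D`. -/
def IsDomSet {V : Type*} (G : SimpleGraph V) (D : Set V) : Prop :=
  ∀ v ∉ D, ∃ u ∈ D, G.Adj u v

/-- `S` is a co-secure dominating set of `G`. -/
def IsCSDS {V : Type*} (G : SimpleGraph V) (S : Set V) : Prop :=
  IsDomSet G S ∧ ∀ u ∈ S, ∃ v, v ∉ S ∧ G.Adj u v ∧ IsDomSet G (S \ {u} ∪ {v})

/-- `D` is a double dominating set of `G`: every vertex outside `D` has at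
least two neighbors in `D`. -/
def IsDoubleDomSet {V : Type*} (G : SimpleGraph V) (D : Set V) : Prop :=
  ∀ v ∉ D, 2 ≤ (G.neighborSet v ∩ D).ncard

/-- The co-secure domination number `γ_cs(G)`. -/
noncomputable def gammaCS {V : Type*} [Fintype V] (G : SimpleGraph V) : ℕ :=
  sInf {n : ℕ | ∃ S : Set V, IsCSDS G S ∧ S.ncard = n}

/-- The double domination number `γ₂(G)`. -/
noncomputable def gamma2 {V : Type*} [Fintype V] (G : SimpleGraph V) : ℕ :=
  sInf {n : ℕ | ∃ D : Set V, IsDoubleDomSet G D ∧ D.ncard = n}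

open Finset

section Domination

variable {V : Type*} {G : SimpleGraph V} {S : Set V}

lemma IsDoubleDomSet.isDomSet (hS : IsDoubleDomSet G S) : IsDomSet G S := by
  intro v hv
  obtain ⟨u, hvu, huS⟩ := Set.nonempty_of_ncard_ne_zero (s := G.neighborSet v ∩ S)
    (by have := hS v hv; omega)
  exact ⟨u, huS, G.adj_symm hvu⟩

lemma IsDoubleDomSet.isCSDS (hS : IsDoubleDomSet G S)
    (hout : ∀ u ∈ S, ∃ v ∉ S, G.Adj u v) : IsCSDS G S := by
  refine ⟨hS.isDomSet, fun u hu => ?_⟩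
  obtain ⟨v, hvS, huv⟩ := hout u hu
  refine ⟨v, hvS, huv, fun w hw => ?_⟩
  simp only [Set.mem_union, Set.mem_sdiff, Set.mem_singleton_iff, not_or, not_and_or,
    not_not] at hw
  obtain ⟨hwS | rfl, hwv⟩ := hw
  · obtain ⟨x, ⟨hwx, hxS⟩, hxu⟩ := Set.exists_ne_of_one_lt_ncard (hS w hwS) u
    exact ⟨x, Or.inl ⟨hxS, hxu⟩, G.adj_symm hwx⟩
  · exact ⟨v, Or.inr rfl, G.adj_symm huv⟩

end Domination

namespace SimpleGraph

variable {V : Type*} [Fintype V] (G : SimpleGraph V) [DecidableRel G.Adj]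

def sameColorNeighbors (c : V → Bool) (v : V) : Finset V := {w | G.Adj v w ∧ c w = c v}

def otherColorNeighbors (c : V → Bool) (v : V) : Finset V := {w | G.Adj v w ∧ c w ≠ c v}

def monochromaticDegreeSum (c : V → Bool) : ℕ := ∑ v, #(G.sameColorNeighbors c v)

lemma card_sameColorNeighbors_add_card_otherColorNeighbors (c : V → Bool) (v : V) :
    #(G.sameColorNeighbors c v) + #(G.otherColorNeighbors c v) = G.degree v := by
  rw [← card_neighborFinset_eq_degree, neighborFinset_eq_filter,
    ← card_filter_add_card_filter_not (s := {w | G.Adj v w}) (fun w => c w = c v),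
    filter_filter, filter_filter]
  rfl

lemma monochromaticDegreeSum_update_not [DecidableEq V] (c : V → Bool) (v : V) :
    G.monochromaticDegreeSum (Function.update c v (!c v)) + 2 * #(G.sameColorNeighbors c v) =
      G.monochromaticDegreeSum c + 2 * #(G.otherColorNeighbors c v) := by
  set c' := Function.update c v (!c v)
  let mono (c : V → Bool) (x y : V) : ℕ := if G.Adj x y ∧ c y = c x then 1 else 0
  let bichrome (x y : V) : ℕ := if G.Adj x y ∧ c y ≠ c x then 1 else 0
  -- Recolouring `v` only changes the pattern of the pairs `(v, y)` and `(x, v)`.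
  have hpoint : ∀ x y, mono c' x y + ((if x = v then mono c x y else 0) +
      (if y = v then mono c x y else 0)) =
      mono c x y + ((if x = v then bichrome x y else 0) + (if y = v then bichrome x y else 0)) := by
    intro x y
    by_cases hx : x = v <;> by_cases hy : y = v <;>
      simp only [mono, bichrome, c', Function.update_apply, hx, hy, if_false, if_true, G.irrefl,
        false_and, Bool.not_eq_eq_eq_not, Bool.eq_not_iff] <;>
      omega
  have hsum := congrArg (fun f : V → V → ℕ => ∑ x, ∑ y, f x y) (funext₂ hpoint)
  simp only [sum_add_distrib, sum_ite_irrel, sum_const_zero, sum_ite_eq', mem_univ, if_true]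
    at hsum
  have hmono (c : V → Bool) : G.monochromaticDegreeSum c = ∑ x, ∑ y, mono c x y := by
    simp only [monochromaticDegreeSum, sameColorNeighbors, card_filter, mono]
  have hsame : #(G.sameColorNeighbors c v) = ∑ y, mono c v y := card_filter _ _
  have hother : #(G.otherColorNeighbors c v) = ∑ y, bichrome v y := card_filter _ _
  have hsame' : ∑ x, mono c x v = ∑ y, mono c v y := by
    simp only [mono, G.adj_comm, eq_comm]
  have hother' : ∑ x, bichrome x v = ∑ y, bichrome v y := by
    simp only [bichrome, G.adj_comm, ne_comm]
  rw [hmono, hmono, hsame, hother]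
  omega

lemma exists_coloring_card_sameColorNeighbors_le :
    ∃ c : V → Bool, ∀ v, #(G.sameColorNeighbors c v) ≤ #(G.otherColorNeighbors c v) := by
  classical
  obtain ⟨c, -, hmin⟩ := exists_min_image univ G.monochromaticDegreeSum univ_nonempty
  refine ⟨c, fun v => ?_⟩
  have := hmin _ (mem_univ (Function.update c v (!c v)))
  have := G.monochromaticDegreeSum_update_not c v
  omega

lemma isCSDS_colorClass {c : V → Bool} (hc : ∀ v, 2 ≤ #(G.otherColorNeighbors c v))
    (b : Bool) : IsCSDS G {v | c v = b} := by
  refine IsDoubleDomSet.isCSDS (fun v hv => ?_) (fun u hu => ?_)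
  · have hv : c v = !b := Bool.eq_not_iff.mpr hv
    have : G.neighborSet v ∩ {w | c w = b} = ↑(G.otherColorNeighbors c v) := by
      ext w
      simp only [otherColorNeighbors, Set.mem_inter_iff, mem_neighborSet, Set.mem_ofPred_eq,
        coe_filter, mem_univ, true_and, hv]
      cases c w <;> cases b <;> simp
    rw [this, Set.ncard_coe_finset]
    exact hc v
  · obtain ⟨w, hw⟩ : (G.otherColorNeighbors c u).Nonempty :=
      card_pos.mp (by have := hc u; omega)
    simp only [otherColorNeighbors, mem_filter, mem_univ, true_and] at hw
    exact ⟨w, fun hwb => hw.2 (hwb.trans hu.symm), hw.1⟩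

end SimpleGraph

lemma exists_colorClass_ncard_le {V : Type*} [Finite V] (c : V → Bool) :
    ∃ b, 2 * {v | c v = b}.ncard ≤ Nat.card V := by
  have hcompl : {v | c v = true}ᶜ = {v | c v = false} := by ext; simp
  have := Set.ncard_add_ncard_compl {v | c v = true}
  rw [hcompl] at this
  by_cases h : {v | c v = true}.ncard ≤ {v | c v = false}.ncard
  · exact ⟨true, by omega⟩
  · exact ⟨false, by omega⟩

theorem stmt13 {V : Type*} [Fintype V] (G : SimpleGraph V)
    (hreg : ∀ v : V, (G.neighborSet v).ncard = 4) :
    (∃ S : Set V, IsCSDS G S ∧ (S.ncard : ℝ) ≤ 2 * (Fintype.card V : ℝ) / 3) ∧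
    (gammaCS G : ℝ) ≤ 2 * (Fintype.card V : ℝ) / 3 := by
  classical
  have hdeg (v : V) : G.degree v = 4 := by
    rw [← hreg v, ← Nat.card_coe_set_eq, Nat.card_eq_fintype_card, G.card_neighborSet_eq_degree]
  obtain ⟨c, hc⟩ := G.exists_coloring_card_sameColorNeighbors_le
  have hcross (v : V) : 2 ≤ #(G.otherColorNeighbors c v) := by
    have hsplit := G.card_sameColorNeighbors_add_card_otherColorNeighbors c v
    rw [hdeg] at hsplit
    linarith [hc v]
  obtain ⟨b, hb⟩ := exists_colorClass_ncard_le c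
  have hS := G.isCSDS_colorClass hcross b
  have hsize : ({v | c v = b}.ncard : ℝ) ≤ 2 * (Fintype.card V : ℝ) / 3 := by
    rw [Nat.card_eq_fintype_card] at hb
    have : (2 * {v | c v = b}.ncard : ℝ) ≤ Fintype.card V := by exact_mod_cast hb
    linarith
  have hgamma : gammaCS G ≤ {v | c v = b}.ncard := Nat.sInf_le ⟨_, hS, rfl⟩
  exact ⟨⟨_, hS, hsize⟩, (Nat.cast_le.mpr hgamma).trans hsize⟩
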